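/- arXiv:2003.06026 — 2 statements merged into one kernel-verified Lean document; each statement's English description precedes it below -/
import Mathlib

section
/- Let (p_n) be a sequence in (0,1) with ∑_n p_n < ∞ and (x_n) a real sequence. Let (Θ_n) be independent random variables with P(Θ_n = 1) = p_n and P(Θ_n = 0) = 1 − p_n, and define the martingale X_t = ∑_{n ≤ ⌊t⌋} x_n (1 − Θ_n/p_n) in its natural filtration. Then almost surely, lim_{t→∞} X_t exists in ℝ if and only if the series ∑_n x_n converges in ℝ. -/
/-!
By the first Borel–Cantelli lemma, `∑ P(Θ_n ≠ 0) = ∑ p_n < ∞` forces, almost surely,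
`Θ_n = 0` for all large `n`. Along such an `ω` the increments of `X` are eventually `x_n`,
so `X_M` and `∑_{n ≤ M} x_n` eventually differ by a constant.
-/

open MeasureTheory Filter ProbabilityTheory Topology Finset

theorem tendsto_comp_nat_floor_iff {α X : Type*} [Semiring α] [LinearOrder α]
    [IsStrictOrderedRing α] [Archimedean α] [FloorSemiring α] {u : ℕ → X} {l : Filter X} :
    Tendsto (fun t : α => u ⌊t⌋₊) atTop l ↔ Tendsto u atTop l := by
  refine ⟨fun h => ?_, fun h => h.comp tendsto_nat_floor_atTop⟩
  simpa [Function.comp_def] using h.comp tendsto_natCast_atTop_atTop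

section PartialSums

variable {G : Type*} [AddCommGroup G] [TopologicalSpace G] [IsTopologicalAddGroup G]

theorem exists_tendsto_sum_Icc_of_eventuallyEq {f g : ℕ → G} (hfg : f =ᶠ[atTop] g)
    (hf : ∃ l, Tendsto (fun M => ∑ n ∈ Icc 1 M, f n) atTop (𝓝 l)) :
    ∃ l, Tendsto (fun M => ∑ n ∈ Icc 1 M, g n) atTop (𝓝 l) := by
  obtain ⟨l, hl⟩ := hf
  obtain ⟨N, hN⟩ := eventually_atTop.1 hfg
  refine ⟨l - ∑ n ∈ Icc 1 N, (f n - g n), (hl.sub_const _).congr' ?_⟩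
  filter_upwards [eventually_ge_atTop N] with M hM
  have hdiff : ∑ n ∈ Icc 1 N, (f n - g n) = ∑ n ∈ Icc 1 M, (f n - g n) := by
    refine sum_subset (Icc_subset_Icc_right hM) fun n hnM hnN => ?_
    rw [hN n (by simp only [mem_Icc, not_and, not_le] at hnM hnN; omega), sub_self]
  rw [hdiff, sum_sub_distrib, sub_sub_cancel]

theorem exists_tendsto_sum_Icc_iff_of_eventuallyEq {f g : ℕ → G} (hfg : f =ᶠ[atTop] g) :
    (∃ l, Tendsto (fun M => ∑ n ∈ Icc 1 M, f n) atTop (𝓝 l)) ↔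
      ∃ l, Tendsto (fun M => ∑ n ∈ Icc 1 M, g n) atTop (𝓝 l) :=
  ⟨exists_tendsto_sum_Icc_of_eventuallyEq hfg, exists_tendsto_sum_Icc_of_eventuallyEq hfg.symm⟩

end PartialSums

section BorelCantelli

variable {Ω : Type*} {m : MeasurableSpace Ω} {μ : Measure Ω}

theorem measure_ne_zero_eq_of_map_eq {Y : Ω → ℝ} (hY : AEMeasurable Y μ) {q : ℝ}
    (hlaw : μ.map Y = ENNReal.ofReal q • Measure.dirac 1 +
      ENNReal.ofReal (1 - q) • Measure.dirac 0) :
    μ {ω | Y ω ≠ 0} = ENNReal.ofReal q := by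
  have hmeas : MeasurableSet ({0}ᶜ : Set ℝ) := (measurableSet_singleton 0).compl
  change μ (Y ⁻¹' {0}ᶜ) = _
  rw [← Measure.map_apply_of_aemeasurable hY hmeas, hlaw]
  simp [Measure.dirac_apply' _ hmeas]

theorem ae_eventually_eq_zero_of_summable {Y : ℕ → Ω → ℝ} {p : ℕ → ℝ}
    (hp : ∀ n, 0 ≤ p n) (hpsum : Summable p)
    (hY : ∀ n, μ {ω | Y n ω ≠ 0} = ENNReal.ofReal (p n)) :
    ∀ᵐ ω ∂μ, ∀ᶠ n in atTop, Y n ω = 0 := by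
  have hfinite : ∑' n, μ {ω | Y n ω ≠ 0} ≠ ⊤ := by
    simp_rw [hY, ← ENNReal.ofReal_tsum_of_nonneg hp hpsum]
    exact ENNReal.ofReal_ne_top
  filter_upwards [ae_eventually_notMem hfinite] with ω hω
  simpa using hω

end BorelCantelli

theorem randomWalk_convergence_general {Ω : Type*} {m : MeasurableSpace Ω} (μ : Measure Ω)
    (p x : ℕ → ℝ) (Θ : ℕ → Ω → ℝ)
    (hp : ∀ n, p n ∈ Set.Ioo (0 : ℝ) 1) (hpsum : Summable p)
    (hmeas : ∀ n, Measurable (Θ n))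
    (hdist : ∀ n, μ.map (Θ n) =
      ENNReal.ofReal (p n) • Measure.dirac (1 : ℝ) +
        ENNReal.ofReal (1 - p n) • Measure.dirac (0 : ℝ)) :
    ∀ᵐ ω ∂μ,
      ((∃ l : ℝ, Tendsto (fun t : ℝ =>
          ∑ n ∈ Finset.Icc 1 ⌊t⌋₊, x n * (1 - Θ n ω / p n)) atTop (nhds l)) ↔
        (∃ l : ℝ, Tendsto (fun M : ℕ =>
          ∑ n ∈ Finset.Icc 1 M, x n) atTop (nhds l))) := by
  have hzero : ∀ᵐ ω ∂μ, ∀ᶠ n in atTop, Θ n ω = 0 :=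
    ae_eventually_eq_zero_of_summable (fun n => (hp n).1.le) hpsum
      fun n => measure_ne_zero_eq_of_map_eq (hmeas n).aemeasurable (hdist n)
  filter_upwards [hzero] with ω hω
  simp_rw [tendsto_comp_nat_floor_iff (u := fun M => ∑ n ∈ Icc 1 M, x n * (1 - Θ n ω / p n))]
  refine exists_tendsto_sum_Icc_iff_of_eventuallyEq ?_
  filter_upwards [hω] with n hn
  simp [hn]

/-- For the random walk `X_t = ∑_{n ≤ ⌊t⌋} x_n (1 - Θ_n/p_n)` with independent `Θ_n`,
`P(Θ_n = 1) = p_n ∈ (0,1)`, `∑ p_n < ∞`: almost surely, `lim_{t→∞} X_t` exists in `ℝ`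
iff the series `∑ x_n` converges in `ℝ`. -/
theorem randomWalk_convergence {Ω : Type*} {m : MeasurableSpace Ω} (μ : Measure Ω)
    [IsProbabilityMeasure μ] (p x : ℕ → ℝ) (Θ : ℕ → Ω → ℝ)
    (hp : ∀ n, p n ∈ Set.Ioo (0 : ℝ) 1) (hpsum : Summable p)
    (hmeas : ∀ n, Measurable (Θ n))
    (hindep : iIndepFun Θ μ)
    (hdist : ∀ n, μ.map (Θ n) =
      ENNReal.ofReal (p n) • Measure.dirac (1 : ℝ) +
        ENNReal.ofReal (1 - p n) • Measure.dirac (0 : ℝ)) :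
    ∀ᵐ ω ∂μ,
      ((∃ l : ℝ, Tendsto (fun t : ℝ =>
          ∑ n ∈ Finset.Icc 1 ⌊t⌋₊, x n * (1 - Θ n ω / p n)) atTop (nhds l)) ↔
        (∃ l : ℝ, Tendsto (fun M : ℕ =>
          ∑ n ∈ Finset.Icc 1 M, x n) atTop (nhds l))) :=
  randomWalk_convergence_general (m := m) μ p x Θ hp hpsum hmeas hdist
end

section
/- With x_n = (−1)^n/√n in the random walk X_t = ∑_{n ≤ ⌊t⌋} x_n(1 − Θ_n/p_n) (independent Θ_n, P(Θ_n=1)=p_n ∈ (0,1), ∑ p_n < ∞): almost surely lim_{t→∞} X_t exists in ℝ while [X,X]_{∞−} = ∞. Hence there exists a locally bounded martingale that converges almost surely but has almost surely infinite quadratic variation. -/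
/-!
The jump `x n * (1 - Θ n / p n)` differs from `x n` only when `Θ n ≠ 0`, an event of probability
`p n`. Since `∑ p n < ∞`, Borel–Cantelli shows that almost surely the jumps equal `x n` for all
large `n`. Changing finitely many terms shifts the partial sums by a constant, so the walk behaves
like `∑ (-1)^n / √n`, which converges by the alternating series test, while its squared jumps
behave like the harmonic series `∑ 1 / n`, which diverges.
-/

open MeasureTheory Filter ProbabilityTheory Finset Topology

section PartialSums

variable {G : Type*} [AddCommGroup G] {a b : ℕ → G}

lemma Filter.EventuallyEq.exists_eventually_sum_Icc_eq_add (h : a =ᶠ[atTop] b) :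
    ∃ C, ∀ᶠ N in atTop, ∑ n ∈ Icc 1 N, a n = ∑ n ∈ Icc 1 N, b n + C := by
  obtain ⟨N₀, hN₀⟩ := eventually_atTop.1 h
  refine ⟨∑ n ∈ Icc 1 N₀, (a n - b n), ?_⟩
  filter_upwards [eventually_ge_atTop N₀] with N hN
  have htail : ∑ n ∈ Icc 1 N₀, (a n - b n) = ∑ n ∈ Icc 1 N, (a n - b n) :=
    sum_subset (Icc_subset_Icc_right hN) fun n hn hn₀ => by
      simp only [mem_Icc, not_and, not_le] at hn hn₀
      rw [hN₀ n (hn₀ hn.1).le, sub_self]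
  rw [htail, ← sum_add_distrib]
  simp only [add_sub_cancel]

lemma Filter.EventuallyEq.exists_tendsto_sum_Icc [TopologicalSpace G] [ContinuousAdd G]
    (h : a =ᶠ[atTop] b) (hb : ∃ l, Tendsto (fun N => ∑ n ∈ Icc 1 N, b n) atTop (𝓝 l)) :
    ∃ l, Tendsto (fun N => ∑ n ∈ Icc 1 N, a n) atTop (𝓝 l) := by
  obtain ⟨l, hl⟩ := hb
  obtain ⟨C, hC⟩ := h.exists_eventually_sum_Icc_eq_add
  exact ⟨l + C, (hl.add_const C).congr' (hC.mono fun _ hN => hN.symm)⟩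

lemma Filter.EventuallyEq.tendsto_sum_Icc_atTop {a b : ℕ → ℝ} (h : a =ᶠ[atTop] b)
    (hb : Tendsto (fun N => ∑ n ∈ Icc 1 N, b n) atTop atTop) :
    Tendsto (fun N => ∑ n ∈ Icc 1 N, a n) atTop atTop := by
  obtain ⟨C, hC⟩ := h.exists_eventually_sum_Icc_eq_add
  exact (tendsto_atTop_add_const_right atTop C hb).congr' (hC.mono fun _ hN => hN.symm)

end PartialSums

lemma sum_Icc_one_eq_sum_range {M : Type*} [AddCommMonoid M] (f : ℕ → M) (N : ℕ) :
    ∑ n ∈ Icc 1 N, f n = ∑ i ∈ range N, f (i + 1) := by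
  rw [← Ico_add_one_right_eq_Icc, sum_Ico_eq_sum_range, add_tsub_cancel_right]
  simp only [add_comm]

lemma exists_tendsto_sum_Icc_neg_one_pow_div_sqrt :
    ∃ l, Tendsto (fun N : ℕ => ∑ n ∈ Icc 1 N, (-1 : ℝ) ^ n / √n) atTop (𝓝 l) := by
  set g : ℕ → ℝ := fun i => (√(i + 1))⁻¹
  have hg_anti : Antitone g := fun i j hij => by
    dsimp only [g]
    gcongr
  have hg_zero : Tendsto g atTop (𝓝 0) := tendsto_inv_atTop_zero.comp <|
    Real.tendsto_sqrt_atTop.comp <| tendsto_atTop_add_const_right _ 1 tendsto_natCast_atTop_atTop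
  obtain ⟨l, hl⟩ := hg_anti.tendsto_alternating_series_of_tendsto_zero hg_zero
  refine ⟨-l, hl.neg.congr fun N => ?_⟩
  rw [sum_Icc_one_eq_sum_range, ← sum_neg_distrib]
  refine sum_congr rfl fun i _ => ?_
  simp only [g, pow_succ]
  push_cast
  ring

lemma tendsto_sum_Icc_inv_natCast_atTop :
    Tendsto (fun N : ℕ => ∑ n ∈ Icc 1 N, (n : ℝ)⁻¹) atTop atTop := by
  simpa [sum_Icc_one_eq_sum_range] using Real.tendsto_sum_range_one_div_nat_succ_atTop

lemma measure_setOf_ne_zero_eq_of_map_eq {Ω : Type*} [MeasurableSpace Ω] {μ : Measure Ω}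
    {f : Ω → ℝ} (hf : Measurable f) {q : ℝ}
    (h : μ.map f = ENNReal.ofReal q • Measure.dirac 1 + ENNReal.ofReal (1 - q) • Measure.dirac 0) :
    μ {ω | f ω ≠ 0} = ENNReal.ofReal q := by
  have hpre : {ω | f ω ≠ 0} = f ⁻¹' {0}ᶜ := rfl
  rw [hpre, ← Measure.map_apply hf (measurableSet_singleton 0).compl, h]
  simp

lemma ae_eventually_eq_zero_of_measure_le {Ω β : Type*} [MeasurableSpace Ω] [Zero β]
    {μ : Measure Ω} {f : ℕ → Ω → β} {p : ℕ → ℝ}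
    (hμ : ∀ n, μ {ω | f n ω ≠ 0} ≤ ENNReal.ofReal (p n)) (hp : Summable p) :
    ∀ᵐ ω ∂μ, ∀ᶠ n in atTop, f n ω = 0 := by
  have hfin : ∑' n, μ {ω | f n ω ≠ 0} ≠ ⊤ :=
    ne_top_of_le_ne_top hp.tsum_ofReal_ne_top (ENNReal.tsum_le_tsum hμ)
  filter_upwards [ae_eventually_notMem hfin] with ω hω
  simpa only [Set.mem_ofPred_eq, not_not] using hω

theorem randomWalk_convergent_infinite_qv_general {Ω : Type*} {m : MeasurableSpace Ω}
    (μ : Measure Ω) (p : ℕ → ℝ) (Θ : ℕ → Ω → ℝ)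
    (hpsum : Summable p)
    (hmeas : ∀ n, Measurable (Θ n))
    (hdist : ∀ n, μ.map (Θ n) =
      ENNReal.ofReal (p n) • Measure.dirac (1 : ℝ) +
        ENNReal.ofReal (1 - p n) • Measure.dirac (0 : ℝ))
    (x : ℕ → ℝ) (hx : ∀ n, x n = (-1 : ℝ) ^ n / Real.sqrt n) :
    ∀ᵐ ω ∂μ,
      (∃ l : ℝ, Tendsto (fun t : ℝ =>
          ∑ n ∈ Finset.Icc 1 ⌊t⌋₊, x n * (1 - Θ n ω / p n)) atTop (nhds l)) ∧
      Tendsto (fun M : ℕ =>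
          ∑ n ∈ Finset.Icc 1 M, (x n * (1 - Θ n ω / p n)) ^ 2) atTop atTop := by
  have hΘ := fun n => (measure_setOf_ne_zero_eq_of_map_eq (hmeas n) (hdist n)).le
  filter_upwards [ae_eventually_eq_zero_of_measure_le hΘ hpsum] with ω hω
  have hjump : (fun n => x n * (1 - Θ n ω / p n)) =ᶠ[atTop] x :=
    hω.mono fun n hn => by simp [hn]
  obtain ⟨l, hl⟩ := hjump.exists_tendsto_sum_Icc <| by
    simpa only [hx] using exists_tendsto_sum_Icc_neg_one_pow_div_sqrt
  refine ⟨⟨l, hl.comp tendsto_nat_floor_atTop⟩, ?_⟩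
  refine (hjump.fun_comp (· ^ 2)).tendsto_sum_Icc_atTop ?_
  simpa [hx, div_pow, ← pow_mul, pow_mul'] using tendsto_sum_Icc_inv_natCast_atTop

/-- With `x_n = (-1)^n/√n` in the random walk `X_t = ∑_{n ≤ ⌊t⌋} x_n (1 - Θ_n/p_n)`:
almost surely `lim_{t→∞} X_t` exists in `ℝ` while `[X,X]_{∞-} = ∞`, i.e. a locally
bounded martingale can converge a.s. while having a.s. infinite quadratic variation. -/
theorem randomWalk_convergent_infinite_qv {Ω : Type*} {m : MeasurableSpace Ω}
    (μ : Measure Ω) [IsProbabilityMeasure μ] (p : ℕ → ℝ) (Θ : ℕ → Ω → ℝ)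
    (hp : ∀ n, p n ∈ Set.Ioo (0 : ℝ) 1) (hpsum : Summable p)
    (hmeas : ∀ n, Measurable (Θ n))
    (hindep : iIndepFun Θ μ)
    (hdist : ∀ n, μ.map (Θ n) =
      ENNReal.ofReal (p n) • Measure.dirac (1 : ℝ) +
        ENNReal.ofReal (1 - p n) • Measure.dirac (0 : ℝ))
    (x : ℕ → ℝ) (hx : ∀ n, x n = (-1 : ℝ) ^ n / Real.sqrt n) :
    ∀ᵐ ω ∂μ,
      (∃ l : ℝ, Tendsto (fun t : ℝ =>
          ∑ n ∈ Finset.Icc 1 ⌊t⌋₊, x n * (1 - Θ n ω / p n)) atTop (nhds l)) ∧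
      Tendsto (fun M : ℕ =>
          ∑ n ∈ Finset.Icc 1 M, (x n * (1 - Θ n ω / p n)) ^ 2) atTop atTop :=
  randomWalk_convergent_infinite_qv_general (m := m) μ p Θ hpsum hmeas hdist x hx
end
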